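/- Let P : ℕ → ℕ satisfy P(i) = 0 if i is prime and P(i) = 1 if i is composite. If p is prime and q is the least prime greater than p, then q = p + 1 + Σ_{m=p+1}^{2p} ∏_{i=p+1}^{m} P(i). -/
import Mathlib


theorem stmt_8 (P : ℕ → ℕ)
    (hP0 : ∀ i, i.Prime → P i = 0)
    (hP1 : ∀ i, 2 ≤ i → ¬ i.Prime → P i = 1)
    (p q : ℕ) (hp : p.Prime) (hq : q.Prime) (hpq : p < q)
    (hleast : ∀ r, r.Prime → p < r → q ≤ r) :
    q = p + 1 + ∑ m ∈ Finset.Icc (p + 1) (2 * p), ∏ i ∈ Finset.Icc (p + 1) m, P i := by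
  have hp2 : 2 ≤ p := hp.two_le
  -- Bertrand: q ≤ 2p
  obtain ⟨r, hr, hpr, hr2p⟩ := Nat.exists_prime_lt_and_le_two_mul p (by omega)
  have hq2p : q ≤ 2 * p := le_trans (hleast r hr hpr) hr2p
  have hprod : ∀ m ∈ Finset.Icc (p + 1) (2 * p),
      ∏ i ∈ Finset.Icc (p + 1) m, P i = if m < q then 1 else 0 := by
    intro m hm
    simp only [Finset.mem_Icc] at hm
    by_cases h : m < q
    · rw [if_pos h]
      apply Finset.prod_eq_one
      intro i hi
      simp only [Finset.mem_Icc] at hi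
      have hnp : ¬ i.Prime := by
        intro hip
        have := hleast i hip (by omega)
        omega
      exact hP1 i (by omega) hnp
    · rw [if_neg h]
      exact Finset.prod_eq_zero (Finset.mem_Icc.mpr ⟨by omega, by omega⟩) (hP0 q hq)
  rw [Finset.sum_congr rfl hprod]
  have hfil : (Finset.Icc (p + 1) (2 * p)).filter (· < q) = Finset.Icc (p + 1) (q - 1) := by
    ext x
    simp only [Finset.mem_filter, Finset.mem_Icc]
    omega
  rw [Finset.sum_boole, hfil, Nat.card_Icc]
  push_cast
  omega
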